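/- arXiv:1808.03236 — 5 statements merged into one kernel-verified Lean document; each statement's English description precedes it below -/
import Mathlib

section
/- Let U ⊆ ℝ × ℝ be open, u : ℝ × ℝ → ℝ continuous on U, and let φ, ω, θ : ℝ × ℝ → ℝ be twice continuously differentiable on U with ω nonvanishing on U. Assume that on U one has Δφ = u·φ, Δω = u·ω, and the Moutard relations ∂x(ω·θ) = −ω²·∂x₂(φ/ω), ∂y(ω·θ) = ω²·∂x₁(φ/ω) hold (i.e. (ωθ)_x = −ω²(φ/ω)_y and (ωθ)_y = ω²(φ/ω)_x). Then on U the function θ satisfies the transformed Schrödinger equation Δθ = ũ·θ, where ũ = −u + 2·(ω_x² + ω_y²)/ω². -/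
/-!
Put `ψ = ωθ` and `g = φ/ω`. The Moutard relations say `ψ_x = -ω² g_y`, `ψ_y = ω² g_x`, so
`Δψ = (ω²)_y g_x - (ω²)_x g_y` once the mixed partials of `g` cancel. Comparing with the product
rule `Δψ = Δω θ + 2 ∇ω·∇θ + ω Δθ`, and eliminating `g_x`, `g_y` with the Moutard relations at the
point, gives `ω² Δθ = (2|∇ω|² - u ω²) θ`.
-/

/-- Partial derivative of `f` at `p` in direction `v`. -/
noncomputable def pd (v : ℝ × ℝ) (f : ℝ × ℝ → ℝ) (p : ℝ × ℝ) : ℝ :=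
  fderiv ℝ f p v

/-- Laplacian of `f` at `p`. -/
noncomputable def lap (f : ℝ × ℝ → ℝ) (p : ℝ × ℝ) : ℝ :=
  pd (1, 0) (pd (1, 0) f) p + pd (0, 1) (pd (0, 1) f) p

open Filter Topology

section PartialDerivatives

variable {f g : ℝ × ℝ → ℝ} {p : ℝ × ℝ}

theorem Filter.EventuallyEq.pd_eq (v : ℝ × ℝ) (h : f =ᶠ[𝓝 p] g) : pd v f p = pd v g p := by
  rw [pd, pd, h.fderiv_eq]

theorem pd_add (v : ℝ × ℝ) (hf : DifferentiableAt ℝ f p) (hg : DifferentiableAt ℝ g p) :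
    pd v (fun q => f q + g q) p = pd v f p + pd v g p := by
  simp [pd, fderiv_fun_add hf hg]

theorem pd_mul (v : ℝ × ℝ) (hf : DifferentiableAt ℝ f p) (hg : DifferentiableAt ℝ g p) :
    pd v (fun q => f q * g q) p = pd v f p * g p + f p * pd v g p := by
  simp only [pd, fderiv_fun_mul hf hg, add_apply, smul_apply, smul_eq_mul]
  ring

theorem pd_neg (v : ℝ × ℝ) : pd v (fun q => -f q) p = -pd v f p := by
  simp [pd, fderiv_fun_neg]

theorem pd_sq (v : ℝ × ℝ) (hf : DifferentiableAt ℝ f p) :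
    pd v (fun q => f q ^ 2) p = 2 * f p * pd v f p := by
  simp [pd, fderiv_fun_pow 2 hf]

theorem ContDiffAt.differentiableAt_pd (v : ℝ × ℝ) (hf : ContDiffAt ℝ 2 f p) :
    DifferentiableAt ℝ (pd v f) p :=
  ((hf.fderiv_right (m := 1) (by norm_num)).differentiableAt one_ne_zero).clm_apply
    (differentiableAt_const v)

theorem ContDiffAt.pd_pd_eq_fderiv_fderiv (v w : ℝ × ℝ) (hf : ContDiffAt ℝ 2 f p) :
    pd w (pd v f) p = fderiv ℝ (fderiv ℝ f) p w v := by
  have hf' : DifferentiableAt ℝ (fderiv ℝ f) p :=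
    (hf.fderiv_right (m := 1) (by norm_num)).differentiableAt one_ne_zero
  unfold pd
  simp [fderiv_clm_apply hf' (differentiableAt_const v)]

theorem ContDiffAt.pd_pd_comm (v w : ℝ × ℝ) (hf : ContDiffAt ℝ 2 f p) :
    pd w (pd v f) p = pd v (pd w f) p := by
  rw [hf.pd_pd_eq_fderiv_fderiv, hf.pd_pd_eq_fderiv_fderiv]
  exact (hf.isSymmSndFDerivAt (by norm_num)).eq w v

theorem ContDiffAt.pd_pd_mul (v w : ℝ × ℝ) (hf : ContDiffAt ℝ 2 f p) (hg : ContDiffAt ℝ 2 g p) :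
    pd w (pd v (fun q => f q * g q)) p
      = pd w (pd v f) p * g p + pd v f p * pd w g p
        + pd w f p * pd v g p + f p * pd w (pd v g) p := by
  have hprod : pd v (fun q => f q * g q) =ᶠ[𝓝 p] fun q => pd v f q * g q + f q * pd v g q := by
    filter_upwards [hf.eventually (by simp), hg.eventually (by simp)] with q hfq hgq
    exact pd_mul v (hfq.differentiableAt two_ne_zero) (hgq.differentiableAt two_ne_zero)
  have hfd := hf.differentiableAt two_ne_zero
  have hgd := hg.differentiableAt two_ne_zero
  rw [hprod.pd_eq, pd_add (f := fun q => pd v f q * g q) (g := fun q => f q * pd v g q) w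
      ((hf.differentiableAt_pd v).mul hgd) (hfd.mul (hg.differentiableAt_pd v)),
    pd_mul w (hf.differentiableAt_pd v) hgd, pd_mul w hfd (hg.differentiableAt_pd v)]
  ring

theorem ContDiffAt.lap_mul (hf : ContDiffAt ℝ 2 f p) (hg : ContDiffAt ℝ 2 g p) :
    lap (fun q => f q * g q) p
      = lap f p * g p + 2 * (pd (1, 0) f p * pd (1, 0) g p + pd (0, 1) f p * pd (0, 1) g p)
        + f p * lap g p := by
  rw [lap, lap, lap, hf.pd_pd_mul _ _ hg, hf.pd_pd_mul _ _ hg]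
  ring

theorem lap_eq_of_weighted_cauchyRiemann {ψ h : ℝ × ℝ → ℝ}
    (hh : DifferentiableAt ℝ h p) (hg : ContDiffAt ℝ 2 g p)
    (hx : pd (1, 0) ψ =ᶠ[𝓝 p] fun q => -h q * pd (0, 1) g q)
    (hy : pd (0, 1) ψ =ᶠ[𝓝 p] fun q => h q * pd (1, 0) g q) :
    lap ψ p = pd (0, 1) h p * pd (1, 0) g p - pd (1, 0) h p * pd (0, 1) g p := by
  have hxx : pd (1, 0) (pd (1, 0) ψ) p
      = -pd (1, 0) h p * pd (0, 1) g p - h p * pd (1, 0) (pd (0, 1) g) p := by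
    rw [hx.pd_eq, pd_mul (f := fun q => -h q) _ hh.neg (hg.differentiableAt_pd _), pd_neg]
    ring
  have hyy : pd (0, 1) (pd (0, 1) ψ) p
      = pd (0, 1) h p * pd (1, 0) g p + h p * pd (0, 1) (pd (1, 0) g) p := by
    rw [hy.pd_eq, pd_mul _ hh (hg.differentiableAt_pd _)]
  rw [lap, hxx, hyy, hg.pd_pd_comm (0, 1) (1, 0)]
  ring

end PartialDerivatives

theorem moutard_transform_solves_transformed_equation_general
    (U : Set (ℝ × ℝ)) (hU : IsOpen U)
    (u φ ω θ : ℝ × ℝ → ℝ)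
    (hφ : ContDiffOn ℝ 2 φ U)
    (hω : ContDiffOn ℝ 2 ω U)
    (hθ : ContDiffOn ℝ 2 θ U)
    (hω0 : ∀ p ∈ U, ω p ≠ 0)
    (hωeq : ∀ p ∈ U, lap ω p = u p * ω p)
    (hMx : ∀ p ∈ U,
      pd (1, 0) (fun q => ω q * θ q) p
        = -((ω p) ^ 2) * pd (0, 1) (fun q => φ q / ω q) p)
    (hMy : ∀ p ∈ U,
      pd (0, 1) (fun q => ω q * θ q) p
        = (ω p) ^ 2 * pd (1, 0) (fun q => φ q / ω q) p) :
    ∀ p ∈ U,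
      lap θ p
        = (-(u p) + 2 * ((pd (1, 0) ω p) ^ 2 + (pd (0, 1) ω p) ^ 2) / (ω p) ^ 2)
            * θ p := by
  intro p hp
  have hUp : U ∈ 𝓝 p := hU.mem_nhds hp
  have hωp : ContDiffAt ℝ 2 ω p := hω.contDiffAt hUp
  have hθp : ContDiffAt ℝ 2 θ p := hθ.contDiffAt hUp
  have hωd : DifferentiableAt ℝ ω p := hωp.differentiableAt two_ne_zero
  have hθd : DifferentiableAt ℝ θ p := hθp.differentiableAt two_ne_zero
  have hlap_product := hωp.lap_mul hθp
  have hlap_moutard := lap_eq_of_weighted_cauchyRiemann (h := fun q => ω q ^ 2)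
    (g := fun q => φ q / ω q) (hωd.pow 2)
    ((hφ.div hω hω0).contDiffAt hUp) (eventually_of_mem hUp hMx) (eventually_of_mem hUp hMy)
  rw [pd_sq _ hωd, pd_sq _ hωd] at hlap_moutard
  have hx := (hMx p hp).symm.trans (pd_mul (1, 0) hωd hθd)
  have hy := (hMy p hp).symm.trans (pd_mul (0, 1) hωd hθd)
  field_simp [hω0 p hp]
  linear_combination (-ω p) * hlap_product + ω p * hlap_moutard + 2 * pd (0, 1) ω p * hy
    + 2 * pd (1, 0) ω p * hx - θ p * ω p * hωeq p hp

/-- the Moutard transform `θ` of a solution `φ` satisfies the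
Schrödinger equation with the transformed potential `ũ = -u + 2(ω_x² + ω_y²)/ω²`. -/
theorem moutard_transform_solves_transformed_equation
    (U : Set (ℝ × ℝ)) (hU : IsOpen U)
    (u φ ω θ : ℝ × ℝ → ℝ)
    (hu : ContinuousOn u U)
    (hφ : ContDiffOn ℝ 2 φ U)
    (hω : ContDiffOn ℝ 2 ω U)
    (hθ : ContDiffOn ℝ 2 θ U)
    (hω0 : ∀ p ∈ U, ω p ≠ 0)
    (hφeq : ∀ p ∈ U, lap φ p = u p * φ p)
    (hωeq : ∀ p ∈ U, lap ω p = u p * ω p)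
    (hMx : ∀ p ∈ U,
      pd (1, 0) (fun q => ω q * θ q) p
        = -((ω p) ^ 2) * pd (0, 1) (fun q => φ q / ω q) p)
    (hMy : ∀ p ∈ U,
      pd (0, 1) (fun q => ω q * θ q) p
        = (ω p) ^ 2 * pd (1, 0) (fun q => φ q / ω q) p) :
    ∀ p ∈ U,
      lap θ p
        = (-(u p) + 2 * ((pd (1, 0) ω p) ^ 2 + (pd (0, 1) ω p) ^ 2) / (ω p) ^ 2)
            * θ p :=
  moutard_transform_solves_transformed_equation_general U hU u φ ω θ hφ hω hθ hω0 hωeq hMx hMy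
end

section
/- Let U ⊆ ℝ × ℝ be open and connected, let ω : ℝ × ℝ → ℝ be continuously differentiable and nonvanishing on U, let φ : ℝ × ℝ → ℝ be continuously differentiable on U, and let θ₁, θ₂ : ℝ × ℝ → ℝ be differentiable on U, both satisfying the Moutard relations with respect to (φ, ω): (ω·θᵢ)_x = −ω²·(φ/ω)_y and (ω·θᵢ)_y = ω²·(φ/ω)_x on U for i = 1, 2. Then there exists a constant C ∈ ℝ such that θ₂ = θ₁ + C/ω on U; i.e. the Moutard relations determine θ up to a summand C/ω. -/
theorem fderiv_eq_of_pd_eq {f g : ℝ × ℝ → ℝ} {p : ℝ × ℝ}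
    (hx : pd (1, 0) f p = pd (1, 0) g p) (hy : pd (0, 1) f p = pd (0, 1) g p) :
    fderiv ℝ f p = fderiv ℝ g p := by
  ext
  · exact hx
  · exact hy

theorem moutard_theta_unique_up_to_C_over_omega_general
    (U : Set (ℝ × ℝ)) (hU : IsOpen U) (hUconn : IsConnected U)
    (φ ω θ₁ θ₂ : ℝ × ℝ → ℝ)
    (hω : ContDiffOn ℝ 1 ω U)
    (hω0 : ∀ p ∈ U, ω p ≠ 0)
    (hθ₁ : DifferentiableOn ℝ θ₁ U)
    (hθ₂ : DifferentiableOn ℝ θ₂ U)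
    (hMx₁ : ∀ p ∈ U,
      pd (1, 0) (fun q => ω q * θ₁ q) p
        = -((ω p) ^ 2) * pd (0, 1) (fun q => φ q / ω q) p)
    (hMy₁ : ∀ p ∈ U,
      pd (0, 1) (fun q => ω q * θ₁ q) p
        = (ω p) ^ 2 * pd (1, 0) (fun q => φ q / ω q) p)
    (hMx₂ : ∀ p ∈ U,
      pd (1, 0) (fun q => ω q * θ₂ q) p
        = -((ω p) ^ 2) * pd (0, 1) (fun q => φ q / ω q) p)
    (hMy₂ : ∀ p ∈ U,
      pd (0, 1) (fun q => ω q * θ₂ q) p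
        = (ω p) ^ 2 * pd (1, 0) (fun q => φ q / ω q) p) :
    ∃ C : ℝ, ∀ p ∈ U, θ₂ p = θ₁ p + C / ω p := by
  have hωd : DifferentiableOn ℝ ω U := hω.differentiableOn one_ne_zero
  obtain ⟨C, hC⟩ := hU.exists_eq_add_of_fderiv_eq hUconn.isPreconnected
    (hωd.mul hθ₂) (hωd.mul hθ₁) fun p hp =>
      fderiv_eq_of_pd_eq ((hMx₂ p hp).trans (hMx₁ p hp).symm)
        ((hMy₂ p hp).trans (hMy₁ p hp).symm)
  refine ⟨C, fun p hp => ?_⟩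
  have hCp : ω p * θ₂ p = ω p * θ₁ p + C := hC hp
  field_simp [hω0 p hp]
  linarith

/-- on an open connected set, the Moutard relations determine `θ`
up to a summand `C/ω`. -/
theorem moutard_theta_unique_up_to_C_over_omega
    (U : Set (ℝ × ℝ)) (hU : IsOpen U) (hUconn : IsConnected U)
    (φ ω θ₁ θ₂ : ℝ × ℝ → ℝ)
    (hω : ContDiffOn ℝ 1 ω U)
    (hω0 : ∀ p ∈ U, ω p ≠ 0)
    (hφ : ContDiffOn ℝ 1 φ U)
    (hθ₁ : DifferentiableOn ℝ θ₁ U)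
    (hθ₂ : DifferentiableOn ℝ θ₂ U)
    (hMx₁ : ∀ p ∈ U,
      pd (1, 0) (fun q => ω q * θ₁ q) p
        = -((ω p) ^ 2) * pd (0, 1) (fun q => φ q / ω q) p)
    (hMy₁ : ∀ p ∈ U,
      pd (0, 1) (fun q => ω q * θ₁ q) p
        = (ω p) ^ 2 * pd (1, 0) (fun q => φ q / ω q) p)
    (hMx₂ : ∀ p ∈ U,
      pd (1, 0) (fun q => ω q * θ₂ q) p
        = -((ω p) ^ 2) * pd (0, 1) (fun q => φ q / ω q) p)
    (hMy₂ : ∀ p ∈ U,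
      pd (0, 1) (fun q => ω q * θ₂ q) p
        = (ω p) ^ 2 * pd (1, 0) (fun q => φ q / ω q) p) :
    ∃ C : ℝ, ∀ p ∈ U, θ₂ p = θ₁ p + C / ω p :=
  moutard_theta_unique_up_to_C_over_omega_general U hU hUconn φ ω θ₁ θ₂ hω hω0 hθ₁ hθ₂ hMx₁ hMy₁
    hMx₂ hMy₂
end

section
/- Let φ, ω, θ : ℝ × ℝ → ℝ be differentiable at a point p ∈ ℝ × ℝ with ω(p) ≠ 0, and suppose the Moutard relations hold at p: the gradient of ωθ at p equals (−ω²·(φ/ω)_y, ω²·(φ/ω)_x)(p). Let ν = (ν₁, ν₂) ∈ ℝ × ℝ be a unit vector and set τ = (−ν₂, ν₁). For a vector v, write D_v f for the directional derivative of f along v at p. Then at p the following two boundary identities hold: D_ν θ + (D_ν ω / ω)·θ = −( D_τ φ − (D_τ ω / ω)·φ ), and D_τ θ + (D_τ ω / ω)·θ = D_ν φ − (D_ν ω / ω)·φ. (These are the relations Γ^ν_{1/ω}θ = −Γ^τ_ω φ and Γ^τ_{1/ω}θ = Γ^ν_ω φ, where Γ^v_w f := D_v f − (D_v w / w)·f.)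 -/
/-! At `p` the linear forms `P v = ω⁻¹ · D_v(ωθ) = Γ^v_{1/ω} θ` and `Q v = ω · D_v(φ/ω) = Γ^v_ω φ`
are related by the Moutard relations as `P = -Q ∘ J` on the standard basis, where
`J (a, b) = (-b, a)` is the rotation by a right angle. By linearity `P = -Q ∘ J` everywhere;
evaluating at `ν` and at `τ = J ν` (using `J² = -1`) gives the two identities. -/

section DirectionalDerivatives

variable {𝕜 E : Type*} [NontriviallyNormedField 𝕜] [NormedAddCommGroup E] [NormedSpace 𝕜 E]
  {f g : E → 𝕜} {x : E}

theorem fderiv_fun_inv_apply (hf : DifferentiableAt 𝕜 f x) (hx : f x ≠ 0) (v : E) :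
    fderiv 𝕜 (fun y => (f y)⁻¹) x v = -fderiv 𝕜 f x v / f x ^ 2 := by
  have h : HasFDerivAt (fun y => (f y)⁻¹) _ x := (hasFDerivAt_inv hx).comp x hf.hasFDerivAt
  rw [h.fderiv]
  simp [div_eq_mul_inv, mul_comm]

theorem inv_mul_fderiv_fun_mul_apply (hf : DifferentiableAt 𝕜 f x) (hg : DifferentiableAt 𝕜 g x)
    (hx : f x ≠ 0) (v : E) :
    (f x)⁻¹ * fderiv 𝕜 (fun y => f y * g y) x v
      = fderiv 𝕜 g x v + fderiv 𝕜 f x v / f x * g x := by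
  rw [fderiv_fun_mul hf hg]
  simp only [add_apply, smul_apply, smul_eq_mul]
  field_simp

theorem mul_fderiv_fun_div_apply (hf : DifferentiableAt 𝕜 f x) (hg : DifferentiableAt 𝕜 g x)
    (hx : f x ≠ 0) (v : E) :
    f x * fderiv 𝕜 (fun y => g y / f y) x v
      = fderiv 𝕜 g x v - fderiv 𝕜 f x v / f x * g x := by
  simp only [div_eq_mul_inv]
  rw [fderiv_fun_mul hg (hf.fun_inv hx)]
  simp only [add_apply, smul_apply, smul_eq_mul, fderiv_fun_inv_apply hf hx]
  field_simp
  ring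

end DirectionalDerivatives

section Rotation

variable {R M : Type*} [CommRing R] [AddCommGroup M] [Module R M]

theorem LinearMap.apply_eq_neg_apply_rotate {P Q : R × R →ₗ[R] M}
    (h₁ : P (1, 0) = -Q (0, 1)) (h₂ : P (0, 1) = Q (1, 0)) (v : R × R) :
    P v = -Q (-v.2, v.1) := by
  have hv : v = v.1 • ((1 : R), (0 : R)) + v.2 • ((0 : R), (1 : R)) := by simp
  have hJv : ((-v.2, v.1) : R × R) = v.1 • ((0 : R), (1 : R)) - v.2 • ((1 : R), (0 : R)) := by
    simp
  rw [hJv, map_sub, map_smul, map_smul]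
  conv_lhs => rw [hv, map_add, map_smul, map_smul, h₁, h₂]
  module

theorem LinearMap.apply_rotate_eq_apply {P Q : R × R →ₗ[R] M}
    (h₁ : P (1, 0) = -Q (0, 1)) (h₂ : P (0, 1) = Q (1, 0)) (v : R × R) :
    P (-v.2, v.1) = Q v := by
  rw [apply_eq_neg_apply_rotate h₁ h₂, ← map_neg]
  simp

end Rotation

theorem moutard_boundary_identities_general
    (φ ω θ : ℝ × ℝ → ℝ) (p : ℝ × ℝ)
    (hφ : DifferentiableAt ℝ φ p)
    (hω : DifferentiableAt ℝ ω p)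
    (hθ : DifferentiableAt ℝ θ p)
    (hω0 : ω p ≠ 0)
    (ν : ℝ × ℝ)
    (hMx : fderiv ℝ (fun q => ω q * θ q) p (1, 0)
      = -((ω p) ^ 2) * fderiv ℝ (fun q => φ q / ω q) p (0, 1))
    (hMy : fderiv ℝ (fun q => ω q * θ q) p (0, 1)
      = (ω p) ^ 2 * fderiv ℝ (fun q => φ q / ω q) p (1, 0)) :
    (fderiv ℝ θ p ν + (fderiv ℝ ω p ν / ω p) * θ p
        = -(fderiv ℝ φ p (-ν.2, ν.1) - (fderiv ℝ ω p (-ν.2, ν.1) / ω p) * φ p))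
    ∧ (fderiv ℝ θ p (-ν.2, ν.1) + (fderiv ℝ ω p (-ν.2, ν.1) / ω p) * θ p
        = fderiv ℝ φ p ν - (fderiv ℝ ω p ν / ω p) * φ p) := by
  set P : ℝ × ℝ →ₗ[ℝ] ℝ := ((ω p)⁻¹ • fderiv ℝ (fun q => ω q * θ q) p).toLinearMap
  set Q : ℝ × ℝ →ₗ[ℝ] ℝ := (ω p • fderiv ℝ (fun q => φ q / ω q) p).toLinearMap
  have hP (v : ℝ × ℝ) : P v = fderiv ℝ θ p v + fderiv ℝ ω p v / ω p * θ p :=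
    inv_mul_fderiv_fun_mul_apply hω hθ hω0 v
  have hQ (v : ℝ × ℝ) : Q v = fderiv ℝ φ p v - fderiv ℝ ω p v / ω p * φ p :=
    mul_fderiv_fun_div_apply hω hφ hω0 v
  have h₁ : P (1, 0) = -Q (0, 1) := by
    simp only [P, Q, ContinuousLinearMap.coe_coe, smul_apply, smul_eq_mul, hMx]
    field_simp
  have h₂ : P (0, 1) = Q (1, 0) := by
    simp only [P, Q, ContinuousLinearMap.coe_coe, smul_apply, smul_eq_mul, hMy]
    field_simp
  rw [← hP, ← hP, ← hQ, ← hQ]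
  exact ⟨LinearMap.apply_eq_neg_apply_rotate h₁ h₂ ν, LinearMap.apply_rotate_eq_apply h₁ h₂ ν⟩

/-- the Moutard relations at a point imply the boundary identities
`Γ^ν_{1/ω} θ = -Γ^τ_ω φ` and `Γ^τ_{1/ω} θ = Γ^ν_ω φ`, where the directional
derivative `D_v f` is `fderiv ℝ f p v` and `Γ^v_w f = D_v f - (D_v w / w) · f`. -/
theorem moutard_boundary_identities
    (φ ω θ : ℝ × ℝ → ℝ) (p : ℝ × ℝ)
    (hφ : DifferentiableAt ℝ φ p)
    (hω : DifferentiableAt ℝ ω p)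
    (hθ : DifferentiableAt ℝ θ p)
    (hω0 : ω p ≠ 0)
    (ν : ℝ × ℝ) (hν : ν.1 ^ 2 + ν.2 ^ 2 = 1)
    (hMx : fderiv ℝ (fun q => ω q * θ q) p (1, 0)
      = -((ω p) ^ 2) * fderiv ℝ (fun q => φ q / ω q) p (0, 1))
    (hMy : fderiv ℝ (fun q => ω q * θ q) p (0, 1)
      = (ω p) ^ 2 * fderiv ℝ (fun q => φ q / ω q) p (1, 0)) :
    (fderiv ℝ θ p ν + (fderiv ℝ ω p ν / ω p) * θ p
        = -(fderiv ℝ φ p (-ν.2, ν.1) - (fderiv ℝ ω p (-ν.2, ν.1) / ω p) * φ p))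
    ∧ (fderiv ℝ θ p (-ν.2, ν.1) + (fderiv ℝ ω p (-ν.2, ν.1) / ω p) * θ p
        = fderiv ℝ φ p ν - (fderiv ℝ ω p ν / ω p) * φ p) :=
  moutard_boundary_identities_general φ ω θ p hφ hω hθ hω0 ν hMx hMy
end

section
/- Let I ⊆ ℝ be open, u : ℝ → ℝ continuously differentiable on I, κ, μ ∈ ℝ with μ + κ ≠ 0. Let ω₁ : ℝ → ℝ be three times continuously differentiable and nonvanishing on I with −ω₁'' + u·ω₁ = κ²·ω₁ on I, and let φ₁ : ℝ → ℝ be three times continuously differentiable on I with −φ₁'' + u·φ₁ = μ²·φ₁ on I. Define the Darboux transform θ₁ := (1/(μ + κ))·(φ₁' − (ω₁'/ω₁)·φ₁) and the transformed potential ũ := u − 2·(ω₁''/ω₁ − (ω₁'/ω₁)²). Then −θ₁'' + ũ·θ₁ = μ²·θ₁ on I. -/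
/-!
Write `v = ω₁'/ω₁`. The equation for `ω₁` turns into the Riccati equation `v' = u - κ² - v²`, and
with it `g = φ₁' - v φ₁` satisfies `g' = (κ² - μ²) φ₁ - v g`. Differentiating once more and
eliminating `v'` gives `-g'' + (u - 2 v') g = μ² g`, and `v' = ω₁''/ω₁ - v²` is the correction
term of the transformed potential. The equation is linear, so it passes to `θ₁ = g / (μ + κ)`.
-/

open Filter Topology

variable {𝕜 : Type*} [NontriviallyNormedField 𝕜] {s : Set 𝕜} {f u ω φ : 𝕜 → 𝕜} {κ μ x : 𝕜}

theorem ContDiffOn.differentiableAt_deriv (hf : ContDiffOn 𝕜 2 f s) (hs : IsOpen s) (hx : x ∈ s) :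
    DifferentiableAt 𝕜 (deriv f) x :=
  ((hf.deriv_of_isOpen hs (by norm_num) : ContDiffOn 𝕜 1 (deriv f) s).contDiffAt
    (hs.mem_nhds hx)).differentiableAt one_ne_zero

theorem hasDerivAt_logDeriv (hω : DifferentiableAt 𝕜 ω x) (hω' : DifferentiableAt 𝕜 (deriv ω) x)
    (hω0 : ω x ≠ 0) :
    HasDerivAt (logDeriv ω) (deriv (deriv ω) x / ω x - logDeriv ω x ^ 2) x :=
  (hω'.hasDerivAt.div hω.hasDerivAt hω0).congr_deriv (by rw [logDeriv_apply]; field_simp)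

theorem hasDerivAt_logDeriv_of_schrodinger (hω : DifferentiableAt 𝕜 ω x)
    (hω' : DifferentiableAt 𝕜 (deriv ω) x) (hω0 : ω x ≠ 0)
    (hωeq : -deriv (deriv ω) x + u x * ω x = κ ^ 2 * ω x) :
    HasDerivAt (logDeriv ω) (u x - κ ^ 2 - logDeriv ω x ^ 2) x :=
  (hasDerivAt_logDeriv hω hω' hω0).congr_deriv (by
    congr 1
    rw [div_eq_iff hω0]
    linear_combination -hωeq)

noncomputable def darbouxTransform (ω φ : 𝕜 → 𝕜) : 𝕜 → 𝕜 := fun y => deriv φ y - logDeriv ω y * φ y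

theorem hasDerivAt_darbouxTransform (hω : DifferentiableAt 𝕜 ω x)
    (hω' : DifferentiableAt 𝕜 (deriv ω) x) (hω0 : ω x ≠ 0)
    (hωeq : -deriv (deriv ω) x + u x * ω x = κ ^ 2 * ω x)
    (hφ : DifferentiableAt 𝕜 φ x) (hφ' : DifferentiableAt 𝕜 (deriv φ) x)
    (hφeq : -deriv (deriv φ) x + u x * φ x = μ ^ 2 * φ x) :
    HasDerivAt (darbouxTransform ω φ)
      ((κ ^ 2 - μ ^ 2) * φ x - logDeriv ω x * darbouxTransform ω φ x) x :=
  (hφ'.hasDerivAt.sub ((hasDerivAt_logDeriv_of_schrodinger hω hω' hω0 hωeq).mul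
    hφ.hasDerivAt)).congr_deriv (by
      unfold darbouxTransform
      linear_combination -hφeq)

theorem schrodinger_darbouxTransform (hs : IsOpen s) (hω : ContDiffOn 𝕜 2 ω s)
    (hω0 : ∀ y ∈ s, ω y ≠ 0) (hωeq : ∀ y ∈ s, -deriv (deriv ω) y + u y * ω y = κ ^ 2 * ω y)
    (hφ : ContDiffOn 𝕜 2 φ s) (hφeq : ∀ y ∈ s, -deriv (deriv φ) y + u y * φ y = μ ^ 2 * φ y)
    (hx : x ∈ s) :
    -deriv (deriv (darbouxTransform ω φ)) x
        + (u x - 2 * deriv (logDeriv ω) x) * darbouxTransform ω φ x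
      = μ ^ 2 * darbouxTransform ω φ x := by
  have hd {f : 𝕜 → 𝕜} (hf : ContDiffOn 𝕜 2 f s) {y : 𝕜} (hy : y ∈ s) :
      DifferentiableAt 𝕜 f y := (hf.differentiableOn two_ne_zero).differentiableAt (hs.mem_nhds hy)
  have hg (y : 𝕜) (hy : y ∈ s) := hasDerivAt_darbouxTransform (hd hω hy)
    (hω.differentiableAt_deriv hs hy) (hω0 y hy) (hωeq y hy) (hd hφ hy)
    (hφ.differentiableAt_deriv hs hy) (hφeq y hy)
  have hv := hasDerivAt_logDeriv_of_schrodinger (hd hω hx) (hω.differentiableAt_deriv hs hx)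
    (hω0 x hx) (hωeq x hx)
  have hg' : deriv (darbouxTransform ω φ) =ᶠ[𝓝 x]
      fun y => (κ ^ 2 - μ ^ 2) * φ y - logDeriv ω y * darbouxTransform ω φ y :=
    eventually_of_mem (hs.mem_nhds hx) fun y hy => (hg y hy).deriv
  have hg'' := (((hd hφ hx).hasDerivAt.const_mul (κ ^ 2 - μ ^ 2)).sub
    (hv.mul (hg x hx))).congr_of_eventuallyEq hg'
  rw [hg''.deriv, hv.deriv]
  unfold darbouxTransform
  ring

theorem darboux_transform_solves_transformed_equation_general
    (I : Set ℝ) (hI : IsOpen I)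
    (u ω₁ φ₁ : ℝ → ℝ) (κ μ : ℝ)
    (hω₁ : ContDiffOn ℝ 3 ω₁ I)
    (hω₁0 : ∀ x ∈ I, ω₁ x ≠ 0)
    (hω₁eq : ∀ x ∈ I, -(deriv (deriv ω₁) x) + u x * ω₁ x = κ ^ 2 * ω₁ x)
    (hφ₁ : ContDiffOn ℝ 3 φ₁ I)
    (hφ₁eq : ∀ x ∈ I, -(deriv (deriv φ₁) x) + u x * φ₁ x = μ ^ 2 * φ₁ x) :
    ∀ x ∈ I,
      -(deriv (deriv (fun y =>
          (1 / (μ + κ)) * (deriv φ₁ y - (deriv ω₁ y / ω₁ y) * φ₁ y))) x)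
        + (u x - 2 * (deriv (deriv ω₁) x / ω₁ x - (deriv ω₁ x / ω₁ x) ^ 2))
            * ((1 / (μ + κ)) * (deriv φ₁ x - (deriv ω₁ x / ω₁ x) * φ₁ x))
        = μ ^ 2 * ((1 / (μ + κ)) * (deriv φ₁ x - (deriv ω₁ x / ω₁ x) * φ₁ x)) := by
  intro x hx
  have hω₁2 : ContDiffOn ℝ 2 ω₁ I := hω₁.of_le (by norm_num)
  have hθ := schrodinger_darbouxTransform hI hω₁2 hω₁0 hω₁eq (hφ₁.of_le (by norm_num))
    hφ₁eq hx
  rw [(hasDerivAt_logDeriv ((hω₁2.differentiableOn two_ne_zero).differentiableAt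
    (hI.mem_nhds hx)) (hω₁2.differentiableAt_deriv hI hx) (hω₁0 x hx)).deriv] at hθ
  simp only [darbouxTransform, logDeriv_apply] at hθ
  rw [deriv_const_mul_field', deriv_const_mul_field',
    show (fun y => deriv φ₁ y - deriv ω₁ y / ω₁ y * φ₁ y) = darbouxTransform ω₁ φ₁ from rfl]
  linear_combination (1 / (μ + κ)) * hθ

/-- the Darboux transform
`θ₁ = (1/(μ+κ)) (φ₁' - (ω₁'/ω₁) φ₁)` of a solution `φ₁` of `-φ₁'' + u φ₁ = μ² φ₁`
satisfies `-θ₁'' + ũ θ₁ = μ² θ₁` with `ũ = u - 2 (ω₁''/ω₁ - (ω₁'/ω₁)²)`. -/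
theorem darboux_transform_solves_transformed_equation
    (I : Set ℝ) (hI : IsOpen I)
    (u ω₁ φ₁ : ℝ → ℝ) (κ μ : ℝ)
    (hμκ : μ + κ ≠ 0)
    (hu : ContDiffOn ℝ 1 u I)
    (hω₁ : ContDiffOn ℝ 3 ω₁ I)
    (hω₁0 : ∀ x ∈ I, ω₁ x ≠ 0)
    (hω₁eq : ∀ x ∈ I, -(deriv (deriv ω₁) x) + u x * ω₁ x = κ ^ 2 * ω₁ x)
    (hφ₁ : ContDiffOn ℝ 3 φ₁ I)
    (hφ₁eq : ∀ x ∈ I, -(deriv (deriv φ₁) x) + u x * φ₁ x = μ ^ 2 * φ₁ x) :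
    ∀ x ∈ I,
      -(deriv (deriv (fun y =>
          (1 / (μ + κ)) * (deriv φ₁ y - (deriv ω₁ y / ω₁ y) * φ₁ y))) x)
        + (u x - 2 * (deriv (deriv ω₁) x / ω₁ x - (deriv ω₁ x / ω₁ x) ^ 2))
            * ((1 / (μ + κ)) * (deriv φ₁ x - (deriv ω₁ x / ω₁ x) * φ₁ x))
        = μ ^ 2 * ((1 / (μ + κ)) * (deriv φ₁ x - (deriv ω₁ x / ω₁ x) * φ₁ x)) :=
  darboux_transform_solves_transformed_equation_general I hI u ω₁ φ₁ κ μ hω₁ hω₁0 hω₁eq hφ₁ hφ₁eq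
end

section
/- (Theorem 2: action of the Darboux transformation on the Dirichlet-to-Neumann map.) Let a < b be reals, u : ℝ → ℝ continuously differentiable on [a,b], and κ, μ ∈ ℝ with κ ≠ μ and κ ≠ −μ. Let ω₁ be three times continuously differentiable and nonvanishing on [a,b] with −ω₁'' + u·ω₁ = κ²·ω₁ on [a,b], and set ũ := u − 2·(ω₁''/ω₁ − (ω₁'/ω₁)²). Let M be the diagonal 2×2 real matrix with diagonal entries ω₁'(a)/ω₁(a) and ω₁'(b)/ω₁(b). Suppose Q is an invertible 2×2 real matrix such that every twice continuously differentiable solution ψ of −ψ'' + u·ψ = μ²·ψ on [a,b] satisfies (ψ'(a), ψ'(b))ᵀ = Q·(ψ(a), ψ(b))ᵀ, that for every v ∈ ℝ² there exists such a solution ψ with (ψ(a), ψ(b)) = v, and that the matrix 1 − M·Q⁻¹ is invertible. Suppose Q̃ is a 2×2 real matrix such that every twice continuously differentiable solution ψ̃ of −ψ̃'' + ũ·ψ̃ = μ²·ψ̃ on [a,b] satisfies (ψ̃'(a), ψ̃'(b))ᵀ = Q̃·(ψ̃(a), ψ̃(b))ᵀ, and that for every w ∈ ℝ² there exists such a solution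 ψ̃ with (ψ̃(a), ψ̃(b)) = w. Then Q̃ = −M + (κ² − μ²)·Q⁻¹·(1 − M·Q⁻¹)⁻¹. -/
/-!
Put `m = ω₁'/ω₁`. Then `m' = u - κ² - m²` (Riccati) and `ũ = 2κ² + 2m² - u`, so for a solution
`ψ̃` of the transformed equation the function `φ = ψ̃' + mψ̃` solves the original one and satisfies
`φ' = (κ² - μ²)ψ̃ + mφ`. Reading both identities at `a` and `b` gives
`(Q - M)(Q̃ + M) = (κ² - μ²)·1`, and `Q - M = (1 - MQ⁻¹)Q` is invertible.

The derivatives in the hypotheses are derivatives on `ℝ`, which at `a` and `b` are not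
determined by the restriction to `[a, b]`. Solutions are therefore handled through one-sided
derivatives and continued beyond `[a, b]` by Taylor polynomials before a DN property is applied.
That `ω₁'(a)` and `ω₁'(b)` are the one-sided derivatives is forced by a transformed solution that
does not vanish there: otherwise the derivatives of `ω₁` at that endpoint are junk zeros, the
equations there force `u = κ²` and `ψ̃'' = (κ² - μ²)ψ̃ ≠ 0`, and the continuous extension of the
interior equation then gives `m = 0`.
-/

open Set Filter Topology Matrix

def IsDNMatrix (a b : ℝ) (V : ℝ → ℝ) (E : ℝ) (Q : Matrix (Fin 2) (Fin 2) ℝ) : Prop :=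
  ∀ ψ : ℝ → ℝ, ContDiffOn ℝ 2 ψ (Icc a b) →
    (∀ x ∈ Icc a b, -(deriv (deriv ψ) x) + V x * ψ x = E * ψ x) →
    ![deriv ψ a, deriv ψ b] = Q *ᵥ ![ψ a, ψ b]

def DirichletSolvable (a b : ℝ) (V : ℝ → ℝ) (E : ℝ) : Prop :=
  ∀ w : Fin 2 → ℝ, ∃ ψ : ℝ → ℝ, ContDiffOn ℝ 2 ψ (Icc a b) ∧
    (∀ x ∈ Icc a b, -(deriv (deriv ψ) x) + V x * ψ x = E * ψ x) ∧ ![ψ a, ψ b] = w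

section Interval

variable {a b c x : ℝ} {f p q : ℝ → ℝ}

theorem deriv_deriv_eq_derivWithin_Icc_of_mem_Ioo (hx : x ∈ Ioo a b) :
    deriv (deriv f) x = derivWithin (derivWithin f (Icc a b)) (Icc a b) x := by
  have h : deriv f =ᶠ[𝓝 x] derivWithin f (Icc a b) := by
    filter_upwards [Ioo_mem_nhds hx.1 hx.2] with y hy
    exact (derivWithin_of_mem_nhds (Icc_mem_nhds hy.1 hy.2)).symm
  rw [h.deriv_eq, derivWithin_of_mem_nhds (Icc_mem_nhds hx.1 hx.2)]

theorem deriv_eq_derivWithin_Icc_of_continuousAt (hab : a < b)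
    (hf : ContDiffOn ℝ 1 f (Icc a b)) (hc : c ∈ Icc a b)
    (hcont : ContinuousAt (deriv f) c) :
    deriv f c = derivWithin f (Icc a b) c := by
  have : (𝓝[Ioo a b] c).NeBot :=
    mem_closure_iff_nhdsWithin_neBot.1 (by rwa [closure_Ioo hab.ne])
  have hw : Tendsto (derivWithin f (Icc a b)) (𝓝[Ioo a b] c) (𝓝 (derivWithin f (Icc a b) c)) :=
    ((hf.continuousOn_derivWithin (uniqueDiffOn_Icc hab) le_rfl) c hc).mono Ioo_subset_Icc_self
  refine tendsto_nhds_unique (hcont.continuousWithinAt (s := Ioo a b)) (hw.congr' ?_)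
  exact eventually_nhdsWithin_of_forall fun y hy =>
    derivWithin_of_mem_nhds (Icc_mem_nhds hy.1 hy.2)

theorem deriv_deriv_eq_derivWithin_Icc_of_differentiableAt (hab : a < b)
    (hf : ContDiffOn ℝ 2 f (Icc a b)) (hc : c ∈ Icc a b)
    (hd : DifferentiableAt ℝ (deriv f) c) :
    deriv (deriv f) c = derivWithin (derivWithin f (Icc a b)) (Icc a b) c := by
  have hf₁ : ContDiffOn ℝ 1 (derivWithin f (Icc a b)) (Icc a b) :=
    hf.derivWithin (uniqueDiffOn_Icc hab) (by norm_num)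
  have huniq : UniqueDiffWithinAt ℝ (Ioo a b) c :=
    uniqueDiffWithinAt_convex (convex_Ioo a b) (by simp [hab]) (by rwa [closure_Ioo hab.ne])
  have hc' : derivWithin f (Icc a b) c = deriv f c :=
    (deriv_eq_derivWithin_Icc_of_continuousAt hab (hf.of_le one_le_two) hc hd.continuousAt).symm
  have h : HasDerivWithinAt (derivWithin f (Icc a b)) (deriv (deriv f) c) (Ioo a b) c :=
    hd.hasDerivAt.hasDerivWithinAt.congr
      (fun y hy => derivWithin_of_mem_nhds (Icc_mem_nhds hy.1 hy.2)) hc'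
  exact huniq.eq_deriv _ h
    ((hf₁.differentiableOn one_ne_zero c hc).hasDerivWithinAt.mono Ioo_subset_Icc_self)

theorem derivWithin_derivWithin_Icc_eq_of_ode (hab : a < b) {V : ℝ → ℝ} {E : ℝ}
    (hf : ContDiffOn ℝ 2 f (Icc a b)) (hV : ContinuousOn V (Icc a b))
    (h : ∀ x ∈ Ioo a b, -(deriv (deriv f) x) + V x * f x = E * f x) :
    EqOn (derivWithin (derivWithin f (Icc a b)) (Icc a b)) (fun x => (V x - E) * f x)
      (Icc a b) := by
  have hs := uniqueDiffOn_Icc hab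
  refine EqOn.of_subset_closure (fun x hx => ?_)
    ((hf.derivWithin hs (m := 1) (by norm_num)).continuousOn_derivWithin hs le_rfl)
    ((hV.sub continuousOn_const).mul hf.continuousOn) Ioo_subset_Icc_self
    (closure_Ioo hab.ne).symm.subset
  have := h x hx
  rw [← deriv_deriv_eq_derivWithin_Icc_of_mem_Ioo hx]
  linarith

noncomputable def glueIcc (a b : ℝ) (p f q : ℝ → ℝ) (x : ℝ) : ℝ :=
  if x < a then p x else if x ≤ b then f x else q x

theorem glueIcc_of_le_left (hab : a ≤ b) (h : p a = f a) (hx : x ≤ a) :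
    glueIcc a b p f q x = p x := by
  rcases hx.lt_or_eq with hx | rfl
  · simp [glueIcc, hx]
  · simp [glueIcc, hab, h]

theorem glueIcc_of_mem (hx : x ∈ Icc a b) : glueIcc a b p f q x = f x := by
  simp [glueIcc, hx.1.not_gt, hx.2]

theorem glueIcc_of_right_le (hab : a ≤ b) (h : q b = f b) (hx : b ≤ x) :
    glueIcc a b p f q x = q x := by
  rcases hx.lt_or_eq with hx | rfl
  · simp [glueIcc, (hab.trans_lt hx).not_gt, hx.not_ge]
  · simp [glueIcc, hab.not_gt, h]

theorem hasDerivAt_glueIcc (hab : a < b) {p' f' q' : ℝ → ℝ}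
    (hp : ∀ x, HasDerivAt p (p' x) x) (hq : ∀ x, HasDerivAt q (q' x) x)
    (hf : ∀ x ∈ Icc a b, HasDerivWithinAt f (f' x) (Icc a b) x)
    (ha : p a = f a) (ha' : p' a = f' a) (hb : q b = f b) (hb' : q' b = f' b) (x : ℝ) :
    HasDerivAt (glueIcc a b p f q) (glueIcc a b p' f' q' x) x := by
  have piece : ∀ t : Set ℝ, IsClosed t →
      (∀ y ∈ t, HasDerivWithinAt (glueIcc a b p f q) (glueIcc a b p' f' q' y) t y) →
      HasDerivWithinAt (glueIcc a b p f q) (glueIcc a b p' f' q' x) t x := by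
    intro t ht h
    by_cases hx : x ∈ t
    · exact h x hx
    · exact HasFDerivWithinAt.of_notMem_closure (by rwa [ht.closure_eq])
  have hleft := piece (Iic a) isClosed_Iic fun y hy => by
    rw [glueIcc_of_le_left hab.le ha' hy]
    exact (hp y).hasDerivWithinAt.congr (fun z hz => glueIcc_of_le_left hab.le ha hz)
      (glueIcc_of_le_left hab.le ha hy)
  have hmid := piece (Icc a b) isClosed_Icc fun y hy => by
    rw [glueIcc_of_mem hy]
    exact (hf y hy).congr (fun z hz => glueIcc_of_mem hz) (glueIcc_of_mem hy)
  have hright := piece (Ici b) isClosed_Ici fun y hy => by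
    rw [glueIcc_of_right_le hab.le hb' hy]
    exact (hq y).hasDerivWithinAt.congr (fun z hz => glueIcc_of_right_le hab.le hb hz)
      (glueIcc_of_right_le hab.le hb hy)
  rw [← hasDerivWithinAt_univ, ← Iic_union_Ici (a := b), ← Iic_union_Icc_eq_Iic hab.le]
  exact (hleft.union hmid).union hright

theorem exists_eqOn_Icc_deriv_eq_derivWithin (hab : a < b) (hf : ContDiffOn ℝ 2 f (Icc a b)) :
    ∃ g : ℝ → ℝ, EqOn g f (Icc a b) ∧ ∀ x ∈ Icc a b,
      deriv g x = derivWithin f (Icc a b) x ∧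
      deriv (deriv g) x = derivWithin (derivWithin f (Icc a b)) (Icc a b) x := by
  set f₁ := derivWithin f (Icc a b)
  set f₂ := derivWithin f₁ (Icc a b)
  have hf₁ : ContDiffOn ℝ 1 f₁ (Icc a b) := hf.derivWithin (uniqueDiffOn_Icc hab) (by norm_num)
  have taylor₂ (c x : ℝ) : HasDerivAt (fun y => f c + f₁ c * (y - c) + f₂ c / 2 * (y - c) ^ 2)
      (f₁ c + f₂ c * (x - c)) x := by
    have h := (hasDerivAt_id x).sub_const c
    exact (((h.const_mul _).const_add _).add ((h.pow 2).const_mul _)).congr_deriv (by simp; ring)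
  have taylor₁ (c x : ℝ) : HasDerivAt (fun y => f₁ c + f₂ c * (y - c)) (f₂ c) x := by
    exact ((((hasDerivAt_id x).sub_const c).const_mul _).const_add _).congr_deriv (by simp)
  have hg := hasDerivAt_glueIcc hab (f' := f₁) (taylor₂ a) (taylor₂ b)
    (fun x hx => ((hf.differentiableOn two_ne_zero) x hx).hasDerivWithinAt)
    (by simp) (by simp) (by simp) (by simp)
  have hg' := hasDerivAt_glueIcc hab (f' := f₂) (taylor₁ a) (taylor₁ b)
    (fun x hx => ((hf₁.differentiableOn one_ne_zero) x hx).hasDerivWithinAt)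
    (by simp) rfl (by simp) rfl
  refine ⟨_, fun x hx => glueIcc_of_mem hx,
    fun x hx => ⟨(hg x).deriv.trans (glueIcc_of_mem hx), ?_⟩⟩
  rw [funext fun y => (hg y).deriv, (hg' x).deriv, glueIcc_of_mem hx]

end Interval

section Darboux

variable {s : Set ℝ} {a b c x κ μ E : ℝ} {u m ω ψ ψ' V : ℝ → ℝ}

theorem IsDNMatrix.derivWithin_eq_mulVec {Q : Matrix (Fin 2) (Fin 2) ℝ}
    (hQ : IsDNMatrix a b V E Q) (hab : a < b) (hψ : ContDiffOn ℝ 2 ψ (Icc a b))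
    (heq : ∀ x ∈ Icc a b, derivWithin (derivWithin ψ (Icc a b)) (Icc a b) x = (V x - E) * ψ x) :
    ![derivWithin ψ (Icc a b) a, derivWithin ψ (Icc a b) b] = Q *ᵥ ![ψ a, ψ b] := by
  obtain ⟨g, hgψ, hg⟩ := exists_eqOn_Icc_deriv_eq_derivWithin hab hψ
  have ha : a ∈ Icc a b := left_mem_Icc.2 hab.le
  have hb : b ∈ Icc a b := right_mem_Icc.2 hab.le
  have h := hQ g (hψ.congr hgψ) fun x hx => by
    rw [(hg x hx).2, heq x hx, hgψ hx]
    ring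
  rwa [(hg a ha).1, (hg b hb).1, hgψ ha, hgψ hb] at h

theorem darboux_potential_eq (hω : ω x ≠ 0)
    (heq : -(deriv (deriv ω) x) + u x * ω x = κ ^ 2 * ω x) :
    u x - 2 * (deriv (deriv ω) x / ω x - (deriv ω x / ω x) ^ 2)
      = 2 * κ ^ 2 + 2 * (deriv ω x / ω x) ^ 2 - u x := by
  rw [show deriv (deriv ω) x = (u x - κ ^ 2) * ω x by linarith, mul_div_cancel_right₀ _ hω]
  ring

theorem hasDerivWithinAt_logDeriv_of_ode (hab : a < b) (hu : ContinuousOn u (Icc a b)) (hω : ContDiffOn ℝ 2 ω (Icc a b))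
    (hω0 : ∀ x ∈ Icc a b, ω x ≠ 0)
    (heq : ∀ x ∈ Ioo a b, -(deriv (deriv ω) x) + u x * ω x = κ ^ 2 * ω x)
    (hx : x ∈ Icc a b) :
    HasDerivWithinAt (fun y => derivWithin ω (Icc a b) y / ω y)
      (u x - κ ^ 2 - (derivWithin ω (Icc a b) x / ω x) ^ 2) (Icc a b) x := by
  have hω₁ : ContDiffOn ℝ 1 (derivWithin ω (Icc a b)) (Icc a b) :=
    hω.derivWithin (uniqueDiffOn_Icc hab) (by norm_num)
  refine (((hω₁.differentiableOn one_ne_zero) x hx).hasDerivWithinAt.div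
    ((hω.differentiableOn two_ne_zero) x hx).hasDerivWithinAt (hω0 x hx)).congr_deriv ?_
  rw [derivWithin_derivWithin_Icc_eq_of_ode hab hω hu heq hx]
  field_simp [hω0 x hx]

theorem hasDerivWithinAt_darboux (hm : HasDerivWithinAt m (u x - κ ^ 2 - m x ^ 2) s x)
    (hψ : HasDerivWithinAt ψ (ψ' x) s x)
    (hψ' : HasDerivWithinAt ψ' ((2 * κ ^ 2 + 2 * m x ^ 2 - u x - μ ^ 2) * ψ x) s x) :
    HasDerivWithinAt (fun y => ψ' y + m y * ψ y)
      ((κ ^ 2 - μ ^ 2) * ψ x + m x * (ψ' x + m x * ψ x)) s x :=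
  (hψ'.add (hm.mul hψ)).congr_deriv (by ring)

theorem hasDerivWithinAt_darboux_deriv (hm : HasDerivWithinAt m (u x - κ ^ 2 - m x ^ 2) s x)
    (hψ : HasDerivWithinAt ψ (ψ' x) s x)
    (hψ' : HasDerivWithinAt ψ' ((2 * κ ^ 2 + 2 * m x ^ 2 - u x - μ ^ 2) * ψ x) s x) :
    HasDerivWithinAt (fun y => (κ ^ 2 - μ ^ 2) * ψ y + m y * (ψ' y + m y * ψ y))
      ((u x - μ ^ 2) * (ψ' x + m x * ψ x)) s x :=
  ((hψ.const_mul _).add (hm.mul (hasDerivWithinAt_darboux hm hψ hψ'))).congr_deriv (by ring)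

theorem darboux_intertwining_Icc (hab : a < b) (hm : ContDiffOn ℝ 1 m (Icc a b))
    (hric : ∀ x ∈ Icc a b, HasDerivWithinAt m (u x - κ ^ 2 - m x ^ 2) (Icc a b) x)
    (hψ : ContDiffOn ℝ 2 ψ (Icc a b))
    (hψeq : ∀ x ∈ Icc a b, derivWithin (derivWithin ψ (Icc a b)) (Icc a b) x
      = (2 * κ ^ 2 + 2 * m x ^ 2 - u x - μ ^ 2) * ψ x) :
    ContDiffOn ℝ 2 (fun y => derivWithin ψ (Icc a b) y + m y * ψ y) (Icc a b) ∧
    ∀ x ∈ Icc a b,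
      derivWithin (fun y => derivWithin ψ (Icc a b) y + m y * ψ y) (Icc a b) x
        = (κ ^ 2 - μ ^ 2) * ψ x + m x * (derivWithin ψ (Icc a b) x + m x * ψ x) ∧
      derivWithin (derivWithin (fun y => derivWithin ψ (Icc a b) y + m y * ψ y) (Icc a b))
        (Icc a b) x = (u x - μ ^ 2) * (derivWithin ψ (Icc a b) x + m x * ψ x) := by
  have hs := uniqueDiffOn_Icc hab
  have hψ₁ : ContDiffOn ℝ 1 (derivWithin ψ (Icc a b)) (Icc a b) := hψ.derivWithin hs (by norm_num)
  have hψd : ∀ x ∈ Icc a b,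
      HasDerivWithinAt ψ (derivWithin ψ (Icc a b) x) (Icc a b) x := fun x hx =>
    ((hψ.differentiableOn two_ne_zero) x hx).hasDerivWithinAt
  have hψ'd : ∀ x ∈ Icc a b, HasDerivWithinAt (derivWithin ψ (Icc a b))
      ((2 * κ ^ 2 + 2 * m x ^ 2 - u x - μ ^ 2) * ψ x) (Icc a b) x := fun x hx =>
    hψeq x hx ▸ ((hψ₁.differentiableOn one_ne_zero) x hx).hasDerivWithinAt
  have hφ' : ∀ x ∈ Icc a b,
      derivWithin (fun y => derivWithin ψ (Icc a b) y + m y * ψ y) (Icc a b) x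
        = (κ ^ 2 - μ ^ 2) * ψ x + m x * (derivWithin ψ (Icc a b) x + m x * ψ x) := fun x hx =>
    (hasDerivWithinAt_darboux (hric x hx) (hψd x hx) (hψ'd x hx)).derivWithin (hs x hx)
  have hφ : ContDiffOn ℝ 1 (fun y => derivWithin ψ (Icc a b) y + m y * ψ y) (Icc a b) :=
    hψ₁.add (hm.mul (hψ.of_le one_le_two))
  refine ⟨?_, fun x hx => ⟨hφ' x hx, ?_⟩⟩
  · refine (contDiffOn_succ_iff_derivWithin (n := 1) hs).2
      ⟨hφ.differentiableOn one_ne_zero, by simp, ?_⟩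
    exact (((hψ.of_le one_le_two).const_smul (κ ^ 2 - μ ^ 2)).add (hm.mul hφ)).congr hφ'
  · rw [derivWithin_congr hφ' (hφ' x hx)]
    exact (hasDerivWithinAt_darboux_deriv (hric x hx) (hψd x hx) (hψ'd x hx)).derivWithin (hs x hx)

theorem sub_diagonal_mul_add_diagonal_eq_smul_one (hab : a < b) (hu : ContinuousOn u (Icc a b)) (hm : ContDiffOn ℝ 1 m (Icc a b))
    (hric : ∀ x ∈ Icc a b, HasDerivWithinAt m (u x - κ ^ 2 - m x ^ 2) (Icc a b) x)
    (hV : ∀ x ∈ Icc a b, V x = 2 * κ ^ 2 + 2 * m x ^ 2 - u x)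
    {Q Qt : Matrix (Fin 2) (Fin 2) ℝ} (hQ : IsDNMatrix a b u (μ ^ 2) Q)
    (hQt : IsDNMatrix a b V (μ ^ 2) Qt) (hsolv : DirichletSolvable a b V (μ ^ 2)) :
    (Q - diagonal ![m a, m b]) * (Qt + diagonal ![m a, m b]) = (κ ^ 2 - μ ^ 2) • 1 := by
  refine ext_iff_mulVec.2 fun w => ?_
  obtain ⟨ψ, hψ, hψeq, rfl⟩ := hsolv w
  have hVc : ContinuousOn V (Icc a b) :=
    (((continuousOn_const.add (continuousOn_const.mul (hm.continuousOn.pow 2))).sub hu)).congr hV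
  have hψ₂ := derivWithin_derivWithin_Icc_eq_of_ode hab hψ hVc
    fun x hx => hψeq x (Ioo_subset_Icc_self hx)
  have hψ₂' : ∀ x ∈ Icc a b, derivWithin (derivWithin ψ (Icc a b)) (Icc a b) x
      = (2 * κ ^ 2 + 2 * m x ^ 2 - u x - μ ^ 2) * ψ x := fun x hx => by
    simp only [hψ₂ hx, hV x hx]
  obtain ⟨hφ, hφ'⟩ := darboux_intertwining_Icc hab hm hric hψ hψ₂'
  have ha : a ∈ Icc a b := left_mem_Icc.2 hab.le
  have hb : b ∈ Icc a b := right_mem_Icc.2 hab.le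
  have hNψ := hQt.derivWithin_eq_mulVec hab hψ fun x hx => hψ₂ hx
  have hNφ := hQ.derivWithin_eq_mulVec hab hφ fun x hx => (hφ' x hx).2
  rw [(hφ' a ha).1, (hφ' b hb).1] at hNφ
  have hDφ : ![derivWithin ψ (Icc a b) a, derivWithin ψ (Icc a b) b]
      + diagonal ![m a, m b] *ᵥ ![ψ a, ψ b]
      = ![derivWithin ψ (Icc a b) a + m a * ψ a, derivWithin ψ (Icc a b) b + m b * ψ b] := by
    ext i
    fin_cases i <;> simp
  rw [← mulVec_mulVec, add_mulVec, ← hNψ, hDφ, sub_mulVec, ← hNφ]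
  ext i
  fin_cases i <;> simp

theorem deriv_eq_derivWithin_of_darboux_solution (hab : a < b) (hκμ : κ ^ 2 - μ ^ 2 ≠ 0) (hu : ContinuousOn u (Icc a b))
    (hω : ContDiffOn ℝ 2 ω (Icc a b)) (hω0 : ∀ x ∈ Icc a b, ω x ≠ 0)
    (hωeq : ∀ x ∈ Icc a b, -(deriv (deriv ω) x) + u x * ω x = κ ^ 2 * ω x)
    (hψ : ContDiffOn ℝ 2 ψ (Icc a b))
    (hψeq : ∀ x ∈ Icc a b, -(deriv (deriv ψ) x)
      + (u x - 2 * (deriv (deriv ω) x / ω x - (deriv ω x / ω x) ^ 2)) * ψ x = μ ^ 2 * ψ x)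
    (hc : c ∈ Icc a b) (hψc : ψ c ≠ 0) :
    deriv ω c = derivWithin ω (Icc a b) c := by
  by_contra hne
  have hω'' : deriv (deriv ω) c = 0 := deriv_zero_of_not_differentiableAt fun hd =>
    hne (deriv_eq_derivWithin_Icc_of_continuousAt hab (hω.of_le one_le_two) hc hd.continuousAt)
  have hω' : deriv ω c = 0 := deriv_zero_of_not_differentiableAt fun hd =>
    hne (hd.hasDerivAt.hasDerivWithinAt.derivWithin (uniqueDiffOn_Icc hab c hc)).symm
  have huc : u c = κ ^ 2 :=
    mul_right_cancel₀ (hω0 c hc) (by linarith [hωeq c hc])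
  have hψ'' : deriv (deriv ψ) c = (κ ^ 2 - μ ^ 2) * ψ c := by
    have := hψeq c hc
    rw [hω'', hω', huc, zero_div] at this
    linarith
  have hψ''w := derivWithin_derivWithin_Icc_eq_of_ode hab hψ (E := μ ^ 2)
    (V := fun x => 2 * κ ^ 2 + 2 * (derivWithin ω (Icc a b) x / ω x) ^ 2 - u x)
    ((continuousOn_const.add (continuousOn_const.mul
      (((hω.continuousOn_derivWithin (uniqueDiffOn_Icc hab) one_le_two).div hω.continuousOn
        hω0).pow 2))).sub hu)
    (fun x hx => by
      have h := hψeq x (Ioo_subset_Icc_self hx)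
      rwa [darboux_potential_eq (hω0 x (Ioo_subset_Icc_self hx)) (hωeq x (Ioo_subset_Icc_self hx)),
        ← derivWithin_of_mem_nhds (f := ω) (Icc_mem_nhds hx.1 hx.2)] at h) hc
  rw [← deriv_deriv_eq_derivWithin_Icc_of_differentiableAt hab hψ hc
    (differentiableAt_of_deriv_ne_zero (hψ'' ▸ mul_ne_zero hκμ hψc)), hψ''] at hψ''w
  simp only [huc] at hψ''w
  have hm : derivWithin ω (Icc a b) c / ω c = 0 := by
    have : 2 * (derivWithin ω (Icc a b) c / ω c) ^ 2 * ψ c = 0 := by linarith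
    simpa [hψc] using this
  exact hne (by rw [hω', (div_eq_zero_iff.1 hm).resolve_right (hω0 c hc)])

end Darboux

theorem eq_neg_add_smul_inv_of_sub_mul_add_eq_smul_one {n R : Type*} [Fintype n] [DecidableEq n]
    [CommRing R] {M Q Qt : Matrix n n R} {c : R} (hQ : IsUnit Q) (hMQ : IsUnit (1 - M * Q⁻¹))
    (h : (Q - M) * (Qt + M) = c • 1) :
    Qt = -M + c • (Q⁻¹ * (1 - M * Q⁻¹)⁻¹) := by
  have hfac : Q - M = (1 - M * Q⁻¹) * Q := by
    rw [sub_mul, one_mul, mul_assoc, nonsing_inv_mul Q ((isUnit_iff_isUnit_det Q).1 hQ), mul_one]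
  have hQM : IsUnit (Q - M).det := (isUnit_iff_isUnit_det _).1 (hfac ▸ hMQ.mul hQ)
  have hQt : Qt + M = c • (Q - M)⁻¹ := by
    rw [← nonsing_inv_mul_cancel_left (A := Q - M) (Qt + M) hQM, h, Matrix.mul_smul, mul_one]
  rw [← Matrix.mul_inv_rev, ← hfac, ← hQt]
  abel

theorem darboux_action_on_DN_matrix_general
    (a b : ℝ) (hab : a < b)
    (u ω₁ : ℝ → ℝ) (κ μ : ℝ)
    (hκμ : κ ≠ μ) (hκμ' : κ ≠ -μ)
    (hu : ContDiffOn ℝ 1 u (Set.Icc a b))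
    (hω₁ : ContDiffOn ℝ 3 ω₁ (Set.Icc a b))
    (hω₁0 : ∀ x ∈ Set.Icc a b, ω₁ x ≠ 0)
    (hω₁eq : ∀ x ∈ Set.Icc a b,
      -(deriv (deriv ω₁) x) + u x * ω₁ x = κ ^ 2 * ω₁ x)
    (M Q Qt : Matrix (Fin 2) (Fin 2) ℝ)
    (hM : M = Matrix.diagonal ![deriv ω₁ a / ω₁ a, deriv ω₁ b / ω₁ b])
    (hQunit : IsUnit Q)
    (hQDN : ∀ ψ : ℝ → ℝ, ContDiffOn ℝ 2 ψ (Set.Icc a b) →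
      (∀ x ∈ Set.Icc a b,
        -(deriv (deriv ψ) x) + u x * ψ x = μ ^ 2 * ψ x) →
      ![deriv ψ a, deriv ψ b] = Q.mulVec ![ψ a, ψ b])
    (hMQ : IsUnit (1 - M * Q⁻¹))
    (hQtDN : ∀ ψt : ℝ → ℝ, ContDiffOn ℝ 2 ψt (Set.Icc a b) →
      (∀ x ∈ Set.Icc a b,
        -(deriv (deriv ψt) x)
          + (u x - 2 * (deriv (deriv ω₁) x / ω₁ x - (deriv ω₁ x / ω₁ x) ^ 2)) * ψt x
          = μ ^ 2 * ψt x) →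
      ![deriv ψt a, deriv ψt b] = Qt.mulVec ![ψt a, ψt b])
    (hQtsurj : ∀ w : Fin 2 → ℝ, ∃ ψt : ℝ → ℝ,
      ContDiffOn ℝ 2 ψt (Set.Icc a b) ∧
      (∀ x ∈ Set.Icc a b,
        -(deriv (deriv ψt) x)
          + (u x - 2 * (deriv (deriv ω₁) x / ω₁ x - (deriv ω₁ x / ω₁ x) ^ 2)) * ψt x
          = μ ^ 2 * ψt x) ∧
      ![ψt a, ψt b] = w) :
    Qt = -M + (κ ^ 2 - μ ^ 2) • (Q⁻¹ * (1 - M * Q⁻¹)⁻¹) := by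
  have hκμ2 : κ ^ 2 - μ ^ 2 ≠ 0 := by
    rw [sq_sub_sq]
    exact mul_ne_zero (fun h => hκμ' (eq_neg_of_add_eq_zero_left h)) (sub_ne_zero.2 hκμ)
  have hω₂ : ContDiffOn ℝ 2 ω₁ (Icc a b) := hω₁.of_le (by norm_num)
  obtain ⟨ψ, hψ, hψeq, hψab⟩ := hQtsurj ![1, 1]
  have hderiv : ∀ x ∈ Icc a b, deriv ω₁ x = derivWithin ω₁ (Icc a b) x := by
    intro x hx
    rcases eq_endpoints_or_mem_Ioo_of_mem_Icc hx with rfl | rfl | hx'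
    · exact deriv_eq_derivWithin_of_darboux_solution hab hκμ2 hu.continuousOn hω₂ hω₁0 hω₁eq
        hψ hψeq hx (by simp [show ψ x = 1 by simpa using congrFun hψab 0])
    · exact deriv_eq_derivWithin_of_darboux_solution hab hκμ2 hu.continuousOn hω₂ hω₁0 hω₁eq
        hψ hψeq hx (by simp [show ψ x = 1 by simpa using congrFun hψab 1])
    · exact (derivWithin_of_mem_nhds (Icc_mem_nhds hx'.1 hx'.2)).symm
  set m : ℝ → ℝ := fun x => derivWithin ω₁ (Icc a b) x / ω₁ x
  refine eq_neg_add_smul_inv_of_sub_mul_add_eq_smul_one hQunit hMQ ?_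
  rw [hM, hderiv a (left_mem_Icc.2 hab.le), hderiv b (right_mem_Icc.2 hab.le)]
  exact sub_diagonal_mul_add_diagonal_eq_smul_one (m := m) hab hu.continuousOn
    ((hω₂.derivWithin (uniqueDiffOn_Icc hab) (by norm_num)).div (hω₂.of_le one_le_two) hω₁0)
    (fun x => hasDerivWithinAt_logDeriv_of_ode hab hu.continuousOn hω₂ hω₁0
      fun y hy => hω₁eq y (Ioo_subset_Icc_self hy))
    (fun x hx => by rw [darboux_potential_eq (hω₁0 x hx) (hω₁eq x hx), hderiv x hx])
    hQDN hQtDN hQtsurj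

/-- Theorem 2: the Darboux transformation acts on the
Dirichlet-to-Neumann matrix by
`Q̃ = -M + (κ² - μ²) Q⁻¹ (1 - M Q⁻¹)⁻¹`, where `M = diag(ω₁'(a)/ω₁(a), ω₁'(b)/ω₁(b))`. -/
theorem darboux_action_on_DN_matrix
    (a b : ℝ) (hab : a < b)
    (u ω₁ : ℝ → ℝ) (κ μ : ℝ)
    (hκμ : κ ≠ μ) (hκμ' : κ ≠ -μ)
    (hu : ContDiffOn ℝ 1 u (Set.Icc a b))
    (hω₁ : ContDiffOn ℝ 3 ω₁ (Set.Icc a b))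
    (hω₁0 : ∀ x ∈ Set.Icc a b, ω₁ x ≠ 0)
    (hω₁eq : ∀ x ∈ Set.Icc a b,
      -(deriv (deriv ω₁) x) + u x * ω₁ x = κ ^ 2 * ω₁ x)
    (M Q Qt : Matrix (Fin 2) (Fin 2) ℝ)
    (hM : M = Matrix.diagonal ![deriv ω₁ a / ω₁ a, deriv ω₁ b / ω₁ b])
    (hQunit : IsUnit Q)
    (hQDN : ∀ ψ : ℝ → ℝ, ContDiffOn ℝ 2 ψ (Set.Icc a b) →
      (∀ x ∈ Set.Icc a b,
        -(deriv (deriv ψ) x) + u x * ψ x = μ ^ 2 * ψ x) →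
      ![deriv ψ a, deriv ψ b] = Q.mulVec ![ψ a, ψ b])
    (hQsurj : ∀ v : Fin 2 → ℝ, ∃ ψ : ℝ → ℝ,
      ContDiffOn ℝ 2 ψ (Set.Icc a b) ∧
      (∀ x ∈ Set.Icc a b,
        -(deriv (deriv ψ) x) + u x * ψ x = μ ^ 2 * ψ x) ∧
      ![ψ a, ψ b] = v)
    (hMQ : IsUnit (1 - M * Q⁻¹))
    (hQtDN : ∀ ψt : ℝ → ℝ, ContDiffOn ℝ 2 ψt (Set.Icc a b) →
      (∀ x ∈ Set.Icc a b,
        -(deriv (deriv ψt) x)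
          + (u x - 2 * (deriv (deriv ω₁) x / ω₁ x - (deriv ω₁ x / ω₁ x) ^ 2)) * ψt x
          = μ ^ 2 * ψt x) →
      ![deriv ψt a, deriv ψt b] = Qt.mulVec ![ψt a, ψt b])
    (hQtsurj : ∀ w : Fin 2 → ℝ, ∃ ψt : ℝ → ℝ,
      ContDiffOn ℝ 2 ψt (Set.Icc a b) ∧
      (∀ x ∈ Set.Icc a b,
        -(deriv (deriv ψt) x)
          + (u x - 2 * (deriv (deriv ω₁) x / ω₁ x - (deriv ω₁ x / ω₁ x) ^ 2)) * ψt x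
          = μ ^ 2 * ψt x) ∧
      ![ψt a, ψt b] = w) :
    Qt = -M + (κ ^ 2 - μ ^ 2) • (Q⁻¹ * (1 - M * Q⁻¹)⁻¹) :=
  darboux_action_on_DN_matrix_general a b hab u ω₁ κ μ hκμ hκμ' hu hω₁ hω₁0 hω₁eq M Q Qt hM hQunit
    hQDN hMQ hQtDN hQtsurj
end
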